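/- If D is a condensed integral domain and D is a ∗-domain, then D is pre-Schreier. -/
import Mathlib


/-- An integral domain is condensed if for every pair of nonzero ideals `I, J`,
the product `I*J` equals the set of products `{i*j : i ∈ I, j ∈ J}`. -/
def IsCondensed (D : Type*) [CommRing D] : Prop :=
  ∀ I J : Ideal D, I ≠ ⊥ → J ≠ ⊥ → ∀ x ∈ I * J, ∃ i ∈ I, ∃ j ∈ J, x = i * j

/-- A nonzero element `x` of a domain is primal if whenever `x ∣ y * z` for
nonzero `y, z`, there are `r, s` with `x = r * s`, `r ∣ y` and `s ∣ z`. -/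
def IsPrimal' {D : Type*} [CommRing D] (x : D) : Prop :=
  x ≠ 0 ∧ ∀ y z : D, y ≠ 0 → z ≠ 0 → x ∣ y * z →
    ∃ r s : D, x = r * s ∧ r ∣ y ∧ s ∣ z

/-- A domain is pre-Schreier if every nonzero element is primal. -/
def IsPreSchreier (D : Type*) [CommRing D] : Prop :=
  ∀ x : D, x ≠ 0 → IsPrimal' x

/-- `D` is a `∗`-domain: for all finite families of nonzero elements
`a_1,…,a_m` and `b_1,…,b_n`, `(⋂ a_i D)(⋂ b_j D) = ⋂_{i,j} a_i b_j D`. -/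
def IsStarDomain (D : Type*) [CommRing D] : Prop :=
  ∀ (m n : ℕ) (a : Fin (m + 1) → D) (b : Fin (n + 1) → D),
    (∀ i, a i ≠ 0) → (∀ j, b j ≠ 0) →
    (⨅ i, Ideal.span {a i}) * (⨅ j, Ideal.span {b j}) =
      ⨅ i, ⨅ j, Ideal.span {a i * b j}

theorem stmt10 (D : Type*) [CommRing D] [IsDomain D]
    (hc : IsCondensed D) (hs : IsStarDomain D) : IsPreSchreier D := by
  intro x hx
  refine ⟨hx, fun y z hy hz hdvd => ?_⟩
  obtain ⟨t, ht⟩ := hdvd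
  set a : Fin 2 → D := ![x, y] with ha
  set b : Fin 2 → D := ![x, z] with hb
  have ha0 : ∀ i, a i ≠ 0 := by
    intro i; fin_cases i <;> simpa [ha]
  have hb0 : ∀ j, b j ≠ 0 := by
    intro j; fin_cases j <;> simpa [hb]
  have hstar := hs 1 1 a b ha0 hb0
  have hmem : x * y * z ∈ (⨅ i, Ideal.span {a i}) * (⨅ j, Ideal.span {b j}) := by
    rw [hstar]
    simp only [Ideal.mem_iInf, Ideal.mem_span_singleton]
    intro i j
    fin_cases i <;> fin_cases j <;>
      simp only [ha, hb, Fin.mk_zero, Fin.mk_one, Matrix.cons_val_zero,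
        Matrix.cons_val_one, Matrix.head_cons, Fin.isValue]
    · exact ⟨t, by linear_combination x * ht⟩
    · exact ⟨y, by ring⟩
    · exact ⟨z, by ring⟩
    · exact ⟨x, by ring⟩
  have hIbot : (⨅ i, Ideal.span {a i}) ≠ ⊥ := by
    intro h
    have : x * y ∈ (⨅ i, Ideal.span {a i}) := by
      simp only [Ideal.mem_iInf, Ideal.mem_span_singleton]
      intro i; fin_cases i
      · exact ⟨y, rfl⟩
      · exact ⟨x, mul_comm x y⟩
    rw [h, Ideal.mem_bot] at this
    exact mul_ne_zero hx hy this
  have hJbot : (⨅ j, Ideal.span {b j}) ≠ ⊥ := by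
    intro h
    have : x * z ∈ (⨅ j, Ideal.span {b j}) := by
      simp only [Ideal.mem_iInf, Ideal.mem_span_singleton]
      intro j; fin_cases j
      · exact ⟨z, rfl⟩
      · exact ⟨x, mul_comm x z⟩
    rw [h, Ideal.mem_bot] at this
    exact mul_ne_zero hx hz this
  obtain ⟨i, hi, j, hj, hij⟩ := hc _ _ hIbot hJbot _ hmem
  simp only [Ideal.mem_iInf, Ideal.mem_span_singleton] at hi hj
  obtain ⟨A, hA⟩ := hi 0
  obtain ⟨C, hC⟩ := hi 1
  obtain ⟨B, hB⟩ := hj 0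
  obtain ⟨E, hE⟩ := hj 1
  simp only [ha, hb, Fin.isValue, Matrix.cons_val_zero, Matrix.cons_val_one,
    Matrix.head_cons] at hA hC hB hE
  -- hA : i = x * A, hC : i = y * C, hB : j = x * B, hE : j = z * E
  have hy' : y = A * E := by
    have h1 : x * z * y = x * z * (A * E) := by
      linear_combination hij + j * hA + x * A * hE
    exact mul_left_cancel₀ (mul_ne_zero hx hz) h1
  have hz' : z = C * B := by
    have h1 : x * y * z = x * y * (C * B) := by
      linear_combination hij + j * hC + y * C * hB
    exact mul_left_cancel₀ (mul_ne_zero hx hy) h1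
  have hx' : x = C * E := by
    have h1 : y * z * x = y * z * (C * E) := by
      linear_combination hij + j * hC + y * C * hE
    exact mul_left_cancel₀ (mul_ne_zero hy hz) h1
  exact ⟨E, C, by rw [hx']; ring, ⟨A, by rw [hy']; ring⟩, ⟨B, hz'⟩⟩
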